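/- Let s ≥ 2 and n ≥ 1 be natural numbers, set h = ⌊n/2⌋, let X' ⊆ {0,…,h−1}, Y' ⊆ {h,…,n−1}, and let d be a natural number. Suppose that for every natural number b < s^n and every fixing c : ({0,…,n−1}\X') → {0,…,s−1} of the remaining digit positions there exist functions H : ({0,…,s−1}^{X'}) → ({0,…,s−1}^d) and G : ({0,…,s−1}^d) → ({0,…,s−1}^{Y'}) such that for every assignment φ : X' → {0,…,s−1}, G(H(φ)) equals the tuple of base-s digits of A_φ·b in positions Y', where A_φ = Σ_{i∈X'} φ(i)·sⁱ + Σ_{i∈{0,…,n−1}\X'} c(i)·sⁱ. Then n·d ≥ |X'|·|Y'|. -/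

import Mathlib

/-!
Take `b = s ^ k` for a shift `k < n` and fix all other digits of `A_φ` to `0`. Multiplying by
`s ^ k` moves digit `x` of `A_φ` to position `x + k`, so the digits at
`T_k = {x ∈ X' | x + k ∈ Y'}` can be read back from `G (H φ)`: `H` is injective on assignments
supported on `T_k`, whence `s ^ |T_k| ≤ s ^ d`. As `0 ≤ y - x < n` for every pair
`(x, y) ∈ X' × Y'`, summing over `k` counts each pair exactly once:
`|X'| |Y'| = ∑ k, |T_k| ≤ n d`.
-/

open Finset

theorem Nat.sum_mul_pow_lt_pow {s x : ℕ} (hs : 0 < s) {S : Finset ℕ} {f : ℕ → ℕ}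
    (hf : ∀ j ∈ S, f j < s) (hS : ∀ j ∈ S, j < x) : ∑ j ∈ S, f j * s ^ j < s ^ x := by
  calc ∑ j ∈ S, f j * s ^ j
      ≤ ∑ j ∈ range x, (s - 1) * s ^ j :=
        sum_le_sum_of_subset_of_nonneg (fun j hj => mem_range.2 (hS j hj)) (fun _ _ _ => zero_le _)
          |>.trans' (sum_le_sum fun j hj => Nat.mul_le_mul_right _ (Nat.le_sub_one_of_lt (hf j hj)))
    _ = s ^ x - 1 := by rw [← mul_sum, mul_comm, geom_sum_mul_of_one_le hs]
    _ < s ^ x := Nat.sub_one_lt (pow_pos hs x).ne'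

theorem Nat.sum_mul_pow_div_pow_mod {s x : ℕ} {S : Finset ℕ} {f : ℕ → ℕ}
    (hf : ∀ j ∈ S, f j < s) (hx : x ∈ S) : (∑ j ∈ S, f j * s ^ j) / s ^ x % s = f x := by
  have hs : 0 < s := (hf x hx).pos
  set low := ∑ j ∈ S with j < x, f j * s ^ j
  have hlow : low < s ^ x :=
    Nat.sum_mul_pow_lt_pow hs (fun j hj => hf j (mem_filter.1 hj).1) fun j hj => (mem_filter.1 hj).2
  have hxmem : x ∈ S.filter (¬ · < x) := mem_filter.2 ⟨hx, lt_irrefl x⟩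
  obtain ⟨M, hM⟩ : s ^ (x + 1) ∣ ∑ j ∈ (S.filter (¬ · < x)).erase x, f j * s ^ j :=
    dvd_sum fun j hj => by
      have := (mem_filter.1 (mem_of_mem_erase hj)).2
      have := ne_of_mem_erase hj
      exact (pow_dvd_pow s (by omega)).mul_left _
  have hsplit : ∑ j ∈ S, f j * s ^ j = low + s ^ x * (f x + s * M) := by
    rw [← sum_filter_add_sum_filter_not S (· < x), ← add_sum_erase _ _ hxmem, hM]
    ring
  rw [hsplit, Nat.add_mul_div_left _ _ (pow_pos hs x), Nat.div_eq_of_lt hlow, zero_add,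
    Nat.add_mul_mod_self_left, Nat.mod_eq_of_lt (hf x hx)]

theorem Fintype.card_le_card_of_injective_pi {α β γ : Type*} [Fintype α] [Fintype β]
    [Fintype γ] (hβ : 1 < Fintype.card β) {F : (α → β) → (γ → β)} (hF : F.Injective) :
    Fintype.card α ≤ Fintype.card γ := by
  classical
  have := Fintype.card_le_of_injective F hF
  rwa [Fintype.card_fun, Fintype.card_fun, Nat.pow_le_pow_iff_right hβ] at this

theorem card_filter_add_mem_eq_card {Y : Finset ℕ} {x n : ℕ}
    (hY : ∀ y ∈ Y, x ≤ y ∧ y < x + n) : #{k ∈ range n | x + k ∈ Y} = #Y := by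
  refine card_nbij' (x + ·) (· - x) (fun k hk => (mem_filter.1 hk).2) (fun y hy => ?_)
    (fun k _ => by simp) (fun y hy => by simp [(hY y hy).1])
  obtain ⟨hxy, hyn⟩ := hY y hy
  simp only [coe_filter, mem_range, Set.mem_ofPred_eq, Nat.add_sub_cancel' hxy]
  exact ⟨by omega, hy⟩

theorem sum_card_filter_add_mem {X Y : Finset ℕ} {n : ℕ}
    (h : ∀ x ∈ X, ∀ y ∈ Y, x ≤ y ∧ y < x + n) :
    ∑ k ∈ range n, #{x ∈ X | x + k ∈ Y} = #X * #Y := by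
  have := sum_card_bipartiteAbove_eq_sum_card_bipartiteBelow (fun k x => x + k ∈ Y)
    (s := range n) (t := X)
  simp only [bipartiteAbove, bipartiteBelow] at this
  rw [this, sum_congr rfl fun x hx => card_filter_add_mem_eq_card (h x hx), sum_const, smul_eq_mul]

theorem card_filter_add_mem_le {s d k : ℕ} (hs : 1 < s) {X Y : Finset ℕ}
    (H : (X → Fin s) → (Fin d → Fin s)) (G : (Fin d → Fin s) → (Y → ℕ))
    (hHG : ∀ φ i,
      G (H φ) i = (∑ j ∈ X.attach, (φ j : ℕ) * s ^ (j : ℕ)) * s ^ k / s ^ (i : ℕ) % s) :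
    #{x ∈ X | x + k ∈ Y} ≤ d := by
  set T := X.filter (· + k ∈ Y)
  let digit (ψ : T → Fin s) (j : ℕ) : ℕ := if h : j ∈ T then ψ ⟨j, h⟩ else 0
  have digit_lt (ψ : T → Fin s) (j : ℕ) : digit ψ j < s := by
    unfold digit; split_ifs <;> omega
  let extend (ψ : T → Fin s) (j : X) : Fin s := ⟨digit ψ j, digit_lt ψ j⟩
  have recover (ψ : T → Fin s) (x : T) :
      G (H (extend ψ)) ⟨x + k, (mem_filter.1 x.2).2⟩ = ψ x := by
    rw [hHG, sum_attach X (fun j => digit ψ j * s ^ j), pow_add,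
      Nat.mul_div_mul_right _ _ (pow_pos (by omega) k),
      Nat.sum_mul_pow_div_pow_mod (fun j _ => digit_lt ψ j) (mem_filter.1 x.2).1]
    simp [digit]
  have hinj : (H ∘ extend).Injective := fun ψ₁ ψ₂ h => funext fun x =>
    Fin.ext (by rw [← recover ψ₁ x, ← recover ψ₂ x]; exact congrArg (G · _) h)
  simpa using Fintype.card_le_card_of_injective_pi (by simpa using hs) hinj

theorem stmt_1_general (s n d : ℕ) (hs : 2 ≤ s)
    (X' Y' : Finset ℕ) (hX : X' ⊆ Finset.range (n / 2))
    (hY : Y' ⊆ Finset.Ico (n / 2) n)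
    (hdom : ∀ b : ℕ, b < s ^ n → ∀ c : ℕ → ℕ, (∀ i ∈ Finset.range n \ X', c i < s) →
      ∃ H : ({x // x ∈ X'} → Fin s) → (Fin d → Fin s),
      ∃ G : (Fin d → Fin s) → ({y // y ∈ Y'} → ℕ),
        ∀ φ : {x // x ∈ X'} → Fin s, ∀ i : {y // y ∈ Y'},
          G (H φ) i =
            (((∑ j ∈ X'.attach, (φ j : ℕ) * s ^ (j : ℕ)) +
                ∑ j ∈ Finset.range n \ X', c j * s ^ j) * b / s ^ (i : ℕ)) % s) :
    X'.card * Y'.card ≤ n * d := by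
  have hXY : ∀ x ∈ X', ∀ y ∈ Y', x ≤ y ∧ y < x + n := fun x hx y hy => by
    have := mem_range.1 (hX hx); have := mem_Ico.1 (hY hy); omega
  calc #X' * #Y'
    _ = ∑ k ∈ range n, #{x ∈ X' | x + k ∈ Y'} := (sum_card_filter_add_mem hXY).symm
    _ ≤ ∑ _k ∈ range n, d := sum_le_sum fun k hk => by
      obtain ⟨H, G, hHG⟩ := hdom (s ^ k) (Nat.pow_lt_pow_right hs (mem_range.1 hk)) (fun _ => 0)
        fun _ _ => by omega
      exact card_filter_add_mem_le hs H G (by simpa using hHG)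
    _ = n * d := by simp

/-- Information-flow form of the dominator-set lemma for integer multiplication:
if for every choice of the second factor `b` and every fixing `c` of the digits
outside `X'` the tuple of base-`s` digits of `A_φ·b` in positions `Y'` can be
computed from `d` intermediate base-`s` digits (i.e. factors through
`{0,…,s−1}^d`), then `n·d ≥ |X'|·|Y'|`. -/
theorem stmt_1 (s n d : ℕ) (hs : 2 ≤ s) (hn : 1 ≤ n)
    (X' Y' : Finset ℕ) (hX : X' ⊆ Finset.range (n / 2))
    (hY : Y' ⊆ Finset.Ico (n / 2) n)
    (hdom : ∀ b : ℕ, b < s ^ n → ∀ c : ℕ → ℕ, (∀ i ∈ Finset.range n \ X', c i < s) →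
      ∃ H : ({x // x ∈ X'} → Fin s) → (Fin d → Fin s),
      ∃ G : (Fin d → Fin s) → ({y // y ∈ Y'} → ℕ),
        ∀ φ : {x // x ∈ X'} → Fin s, ∀ i : {y // y ∈ Y'},
          G (H φ) i =
            (((∑ j ∈ X'.attach, (φ j : ℕ) * s ^ (j : ℕ)) +
                ∑ j ∈ Finset.range n \ X', c j * s ^ j) * b / s ^ (i : ℕ)) % s) :
    X'.card * Y'.card ≤ n * d :=
  stmt_1_general s n d hs X' Y' hX hY hdom
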